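/- Let n ≥ 3 be an integer and J_n = {0,…,n−2} ∪ {n+1,…,2n−1}. Let (m_k)_{k∈J_n} be positive integers such that exactly n of them equal 1, none of them equals 2, and at least one of them is greater than 2. Then there exist an index t ∈ J_n with m_t = 1 and nonzero complex numbers z_k (k ∈ J_n, k ≠ t), each a periodic point of minimal period m_k of the map f_0(w) = w^n, such that the (2n−2)×(2n−2) matrix with rows and columns indexed by J_n, whose row t is the vector with entry −1 in column 2n−1 and 0 in every other column, and whose (k,i)-entry for k ≠ t is z_k^{−n^{m_k−1}}·P_{n,i,m_k}(z_k), is invertible. -/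

import Mathlib

/-- The set of periodic points `z ∈ ℂ` of minimal period `m` of the map `f₀(w) = wⁿ`:
`f₀^∘m(z) = z` and `f₀^∘r(z) ≠ z` for all `1 ≤ r < m`. -/
def perSet (n m : ℕ) : Set ℂ :=
  {z : ℂ | (fun w : ℂ => w ^ n)^[m] z = z ∧
    ∀ r, 1 ≤ r → r < m → (fun w : ℂ => w ^ n)^[r] z ≠ z}

/-- The polynomial `P_{n,j,m} ∈ ℂ[z]` from Proposition 4.3:
`P_{n,j,m}(z) = (j n^{m-1} - n^m)(z^{(j+1)n^{m-1}-1} + ∑_{i=0}^{m-2} z^{n^i(j-n)+n^{m-1}})`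
for `0 ≤ j ≤ n-2` (where `n^i(j-n) + n^{m-1} = n^{m-1} - n^i (n-j)` is a nonnegative
integer), `P_{n,j,m}(z) = (j n^{m-1} - n^m) ∑_{i=0}^{m-1} z^{n^i(j-n)+n^{m-1}}` for
`n+1 ≤ j ≤ 2n-2`, and
`P_{n,j,m}(z) = (j n^{m-1} - n^m)(z + ∑_{i=0}^{m-2} z^{n^i(n-1)+n^{m-1}})` for `j = 2n-1`. -/
noncomputable def P (n j m : ℕ) : Polynomial ℂ :=
  Polynomial.C ((j : ℂ) * (n : ℂ) ^ (m - 1) - (n : ℂ) ^ m) *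
    (if j ≤ n - 2 then
      Polynomial.X ^ ((j + 1) * n ^ (m - 1) - 1) +
        ∑ i ∈ Finset.range (m - 1), Polynomial.X ^ (n ^ (m - 1) - n ^ i * (n - j))
    else if j ≤ 2 * n - 2 then
      ∑ i ∈ Finset.range m, Polynomial.X ^ (n ^ i * (j - n) + n ^ (m - 1))
    else
      Polynomial.X +
        ∑ i ∈ Finset.range (m - 1), Polynomial.X ^ (n ^ i * (n - 1) + n ^ (m - 1)))

/-- The index set `J_n = {0,…,n-2} ∪ {n+1,…,2n-1}`. -/
def Jset (n : ℕ) : Finset ℕ :=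
  (Finset.range (2 * n)).filter (fun k => k ≠ n - 1 ∧ k ≠ n)

/-!
Up to the factor `n^(m-1) (i - n)`, the entry `z^(-n^(m-1)) P_{n,i,m}(z)` is the orbit sum
`S_m(z, i - n) = ∑_{j<m} z^((i-n) nʲ)`. Expanding along the row `t`, it suffices that the
rows `k ≠ t` of `S_{m_k}(z_k, i - n)`, over the columns `i ≠ 2n - 1`, are independent. These
columns carry the exponents `r - (n - 1)` for `r ≤ n - 2` (column `0` has exponent `-n`, which
the orbit identifies with `-1`) and `r` for `1 ≤ r ≤ n - 2`. The differences
`D_r = S(r) - S(r - (n - 1))` vanish at the `n - 1` nonzero fixed points, the roots of unity of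
order `n - 1`, so the matrix becomes block triangular: a Vandermonde block for the fixed points,
and the block `(D_r(z_k))` for the `n - 2` indices with `m_k ≥ 3`.

Since `D_r(ζ z) = ζ^r D_r(z)` for those roots of unity `ζ`, the vectors `(D_r(z))_r` with `z` of
exact period `m` span `ℂ^(n-2)` as soon as each `D_r` is nonzero at some such `z`; this holds
because the points of exact period `m` outnumber the roots of the polynomial
`z^((n-1-r) n^(m-1)) D_r(z)`, of degree at most `(n - 1) n^(m-1)`. The rows of the second block
are then chosen one at a time, each outside the span of the previous ones.
-/

open Finset Polynomial

theorem pow_pow_eq_self {M : Type*} [Monoid M] {z : M} {n : ℕ} (h : z ^ n = z) (j : ℕ) :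
    z ^ n ^ j = z := by
  induction j with
  | zero => simp
  | succ j ih => rw [pow_succ, pow_mul, ih, h]

theorem zpow_mul_natCast_of_pow_eq_self {G : Type*} [DivisionMonoid G] {z : G} {k : ℕ}
    (h : z ^ k = z) (e : ℤ) : z ^ (e * k) = z ^ e := by
  rw [mul_comm, zpow_mul, zpow_natCast, h]

theorem zpow_sub_pred_of_pow_eq_self {G : Type*} [GroupWithZero G] {z : G} {n : ℕ}
    (h : z ^ n = z) (hz : z ≠ 0) (e : ℤ) : z ^ (e - (n - 1 : ℤ)) = z ^ e := by
  rw [zpow_sub₀ hz, zpow_sub_one₀ hz, zpow_natCast, h, mul_inv_cancel₀ hz, div_one]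

theorem zpow_add_pred_of_pow_eq_self {G : Type*} [GroupWithZero G] {z : G} {n : ℕ}
    (h : z ^ n = z) (hz : z ≠ 0) (e : ℤ) : z ^ (e + (n - 1 : ℤ)) = z ^ e := by
  rw [← zpow_sub_pred_of_pow_eq_self h hz (e + (n - 1 : ℤ)), add_sub_cancel_right]

theorem pow_eq_self_iff_pow_pred_eq_one {M : Type*} [MonoidWithZero M] [IsRightCancelMulZero M]
    {z : M} (hz : z ≠ 0) {k : ℕ} (hk : 1 ≤ k) :
    z ^ k = z ↔ z ^ (k - 1) = 1 := by
  conv_lhs => rw [← Nat.sub_add_cancel hk, pow_succ]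
  exact ⟨fun h => mul_right_cancel₀ hz (h.trans (one_mul z).symm),
    fun h => by rw [h, one_mul]⟩

theorem Complex.card_nthRootsFinset_one {N : ℕ} (hN : N ≠ 0) :
    #(nthRootsFinset N (1 : ℂ)) = N :=
  (Complex.isPrimitiveRoot_exp N hN).card_nthRootsFinset

theorem eq_zero_of_forall_sum_mul_pow_eq_zero {F ι : Type*} [Field F] [DecidableEq ι]
    {s : Finset ι} {x : ι → F} (hx : Set.InjOn x s) {N : ℕ} (hN : #s ≤ N) {c : ι → F}
    (h : ∀ r < N, ∑ k ∈ s, c k * x k ^ r = 0) : ∀ k ∈ s, c k = 0 := by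
  intro k₀ hk₀
  -- pair the relations with the Lagrange basis polynomial of `k₀`, of degree `< N`
  set p := Lagrange.basis s x k₀
  have hp : p.natDegree < N := by
    rw [Lagrange.natDegree_basis hx hk₀]
    have := card_pos.mpr ⟨k₀, hk₀⟩
    omega
  calc c k₀ = ∑ k ∈ s, c k * p.eval (x k) := by
        rw [sum_eq_single k₀
          (fun k hk hne => by rw [Lagrange.eval_basis_of_ne hne.symm hk, mul_zero])
          (absurd hk₀), Lagrange.eval_basis_self hx hk₀, mul_one]
    _ = ∑ r ∈ range N, p.coeff r * ∑ k ∈ s, c k * x k ^ r := by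
        simp only [eval_eq_sum_range' hp, mul_sum, sum_comm (s := s)]
        refine sum_congr rfl fun r _ => sum_congr rfl fun k _ => by ring
    _ = 0 := sum_eq_zero fun r hr => by rw [h r (mem_range.mp hr), mul_zero]

theorem exists_linearIndepOn_of_span_image_eq_top {K V κ α : Type*} [DivisionRing K]
    [AddCommGroup V] [Module K V] [FiniteDimensional K V] [Nonempty α]
    (s : Finset κ) (hs : #s ≤ Module.finrank K V) (T : κ → Set α) (g : κ → α → V)
    (hspan : ∀ k ∈ s, Submodule.span K (g k '' T k) = ⊤) :
    ∃ x : κ → α, (∀ k ∈ s, x k ∈ T k) ∧ LinearIndepOn K (fun k => g k (x k)) s := by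
  classical
  induction s using Finset.induction_on with
  | empty => exact ⟨fun _ => Classical.arbitrary α, by simp, by simp⟩
  | @insert a s ha ih =>
    rw [card_insert_of_notMem ha] at hs
    obtain ⟨x, hxT, hx⟩ := ih (by omega) fun k hk => hspan k (mem_insert_of_mem hk)
    set W := Submodule.span K ((fun k => g k (x k)) '' s)
    have hW : W ≠ ⊤ := fun h => by
      have hle := finrank_span_finset_le_card (R := K) (s.image fun k => g k (x k))
      rw [coe_image] at hle
      change Module.finrank K W ≤ _ at hle
      rw [h, finrank_top] at hle
      have := hle.trans card_image_le
      omega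
    obtain ⟨y, hyT, hyW⟩ : ∃ y ∈ T a, g a y ∉ W := by
      by_contra! h
      exact hW (eq_top_iff.mpr ((hspan a (mem_insert_self a s)).symm.le.trans
        (Submodule.span_le.mpr (Set.image_subset_iff.mpr h))))
    have hupd : Set.EqOn (fun k => g k (x k)) (fun k => g k (Function.update x a y k)) s :=
      fun k hk => by simp only [Function.update_of_ne (ne_of_mem_of_not_mem hk ha)]
    refine ⟨Function.update x a y, fun k hk => ?_, ?_⟩
    · rcases mem_insert.mp hk with rfl | hk
      · simpa using hyT
      · rw [Function.update_of_ne (ne_of_mem_of_not_mem hk ha)]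
        exact hxT k hk
    · rw [coe_insert, linearIndepOn_insert (by simpa using ha)]
      refine ⟨hx.congr hupd, ?_⟩
      rwa [← Set.image_congr hupd, Function.update_self]

open scoped Matrix in
theorem Matrix.det_ne_zero_of_row_eq_single {K ι : Type*} [Field K] [Fintype ι] [DecidableEq ι]
    {M : Matrix ι ι K} {t c : ι} {u : K} (hu : u ≠ 0) (ht : M t = Pi.single c u)
    (hrest : ∀ w : ι → K, w t = 0 → (∀ i ≠ c, (w ᵥ* M) i = 0) → w = 0) :
    M.det ≠ 0 := by
  intro hdet
  obtain ⟨v, hv0, hv⟩ := Matrix.exists_vecMul_eq_zero_iff.mpr hdet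
  have hsplit : v = Function.update v t 0 + Pi.single t (v t) := by
    ext i
    by_cases hi : i = t <;> simp [hi]
  have hvM : v ᵥ* M = Function.update v t 0 ᵥ* M + v t • Pi.single c u := by
    conv_lhs => rw [hsplit]
    rw [Matrix.add_vecMul, Matrix.single_vecMul, Matrix.row, ht]
  have hw : Function.update v t 0 = 0 := hrest _ (by simp) fun i hi => by
    simpa [hv, hi] using (congrFun hvM i).symm
  have hvt : v t = 0 := by
    simpa [hv, hw, hu] using congrFun hvM c
  exact hv0 (by rw [hsplit, hw, hvt]; simp)

theorem mem_perSet_iff {n m : ℕ} {z : ℂ} :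
    z ∈ perSet n m ↔ z ^ n ^ m = z ∧ ∀ j, 1 ≤ j → j < m → z ^ n ^ j ≠ z := by
  simp only [perSet, Set.mem_ofPred_eq, pow_iterate]

theorem mul_mem_perSet {n m : ℕ} {ζ z : ℂ} (hζ : ζ ^ n = ζ) (hζ0 : ζ ≠ 0)
    (hz : z ∈ perSet n m) : ζ * z ∈ perSet n m := by
  simp only [mem_perSet_iff, mul_pow, pow_pow_eq_self hζ, ne_eq, mul_right_inj' hζ0] at hz ⊢
  exact hz

theorem one_add_sum_pow_properDivisors_lt {n m : ℕ} (hn : 2 ≤ n) (hm : 3 ≤ m) :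
    1 + ∑ d ∈ m.properDivisors, n ^ d < n ^ (m - 1) := by
  have h0 : 0 ∉ m.properDivisors := by simp
  have hlt : ∀ d ∈ insert 0 m.properDivisors, d < m - 1 := by
    intro d hd
    rcases mem_insert.mp hd with rfl | hd
    · omega
    obtain ⟨⟨e, rfl⟩, hde⟩ := Nat.mem_properDivisors.mp hd
    have he : 2 ≤ e := by
      by_contra he
      interval_cases e <;> simp at hde
    have := Nat.mul_le_mul_left d he
    omega
  simpa [sum_insert h0] using Nat.geomSum_lt hn hlt

theorem mem_perSet_of_pow_eq_one {n m : ℕ} (hn : 1 ≤ n) {ξ : ℂ} (hξ0 : ξ ≠ 0)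
    (hξ : ξ ^ (n ^ m - 1) = 1) (hd : ∀ d ∈ m.properDivisors, ξ ^ (n ^ d - 1) ≠ 1) :
    ξ ∈ perSet n m := by
  rw [mem_perSet_iff, pow_eq_self_iff_pow_pred_eq_one hξ0 (Nat.one_le_pow _ _ hn)]
  refine ⟨hξ, fun j hj hjm hξj => hd (Nat.gcd j m) ?_ ?_⟩
  · exact Nat.mem_properDivisors.mpr
      ⟨Nat.gcd_dvd_right _ _, (Nat.gcd_le_left _ (by omega)).trans_lt hjm⟩
  · rw [pow_eq_self_iff_pow_pred_eq_one hξ0 (Nat.one_le_pow _ _ hn)] at hξj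
    rw [← Nat.pow_sub_one_gcd_pow_sub_one]
    exact pow_gcd_eq_one.mpr ⟨hξj, hξ⟩

noncomputable def orbitPowSum (n m : ℕ) (z : ℂ) (e : ℤ) : ℂ :=
  ∑ j ∈ range m, z ^ (e * (n : ℤ) ^ j)

section OrbitPowSum

variable {n m : ℕ}

theorem orbitPowSum_one (z : ℂ) (e : ℤ) : orbitPowSum n 1 z e = z ^ e := by
  simp [orbitPowSum]

theorem orbitPowSum_mul_of_pow_eq_self {ζ : ℂ} (hζ : ζ ^ n = ζ) (z : ℂ) (e : ℤ) :
    orbitPowSum n m (ζ * z) e = ζ ^ e * orbitPowSum n m z e := by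
  rw [orbitPowSum, orbitPowSum, mul_sum]
  refine sum_congr rfl fun j _ => ?_
  rw [mul_zpow, ← Nat.cast_pow, zpow_mul_natCast_of_pow_eq_self (pow_pow_eq_self hζ j)]

theorem orbitPowSum_mul_self {z : ℂ} (hz : z ^ n ^ m = z) (e : ℤ) :
    orbitPowSum n m z (e * n) = orbitPowSum n m z e := by
  have key := sum_range_succ' (fun j => z ^ (e * (n : ℤ) ^ j)) m
  rw [sum_range_succ, ← Nat.cast_pow, zpow_mul_natCast_of_pow_eq_self hz, pow_zero,
    mul_one] at key
  simp only [orbitPowSum, mul_assoc, ← pow_succ']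
  exact (add_right_cancel key).symm

end OrbitPowSum

noncomputable def orbitDiff (n m r : ℕ) (z : ℂ) : ℂ :=
  orbitPowSum n m z r - orbitPowSum n m z (r - (n - 1 : ℤ))

noncomputable def orbitDiffVec (n m : ℕ) (z : ℂ) : Fin (n - 2) → ℂ :=
  fun r => orbitDiff n m (r + 1) z

section OrbitDiff

variable {n m : ℕ}

theorem orbitDiff_one_of_pow_eq_self {z : ℂ} (hz : z ^ n = z) (hz0 : z ≠ 0) (r : ℕ) :
    orbitDiff n 1 r z = 0 := by
  rw [orbitDiff, orbitPowSum_one, orbitPowSum_one, zpow_sub_pred_of_pow_eq_self hz hz0, sub_self]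

theorem orbitDiff_mul_of_pow_eq_self {ζ : ℂ} (hζ : ζ ^ n = ζ) (hζ0 : ζ ≠ 0) (r : ℕ)
    (z : ℂ) :
    orbitDiff n m r (ζ * z) = ζ ^ r * orbitDiff n m r z := by
  rw [orbitDiff, orbitDiff, orbitPowSum_mul_of_pow_eq_self hζ, orbitPowSum_mul_of_pow_eq_self hζ,
    zpow_sub_pred_of_pow_eq_self hζ hζ0, zpow_natCast, mul_sub]

end OrbitDiff

section OrbitDiffPoly

variable {n m r : ℕ}

noncomputable def orbitDiffPoly (n m r : ℕ) : ℂ[X] :=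
  ∑ j ∈ range m, (X ^ (r * n ^ j + (n - 1 - r) * n ^ (m - 1)) -
    X ^ ((n - 1 - r) * (n ^ (m - 1) - n ^ j)))

theorem eval_orbitDiffPoly (hn : 1 ≤ n) (hr : r ≤ n - 1) {z : ℂ} (hz : z ≠ 0) :
    (orbitDiffPoly n m r).eval z = z ^ ((n - 1 - r) * n ^ (m - 1)) * orbitDiff n m r z := by
  simp only [orbitDiffPoly, orbitDiff, orbitPowSum, eval_finsetSum, eval_sub, eval_pow, eval_X,
    mul_sub, mul_sum, ← sum_sub_distrib]
  refine sum_congr rfl fun j hj => ?_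
  have hj : n ^ j ≤ n ^ (m - 1) := Nat.pow_le_pow_right hn (by simp at hj; omega)
  have hcast : ((n - 1 - r : ℕ) : ℤ) = n - 1 - r := by omega
  simp only [← zpow_natCast, ← zpow_add₀ hz]
  congr 2 <;> push_cast [hcast, hj] <;> ring

theorem orbitDiffPoly_coeff_zero (hr : r < n - 1) (hm : 1 ≤ m) :
    (orbitDiffPoly n m r).coeff 0 = -1 := by
  have hpos : 0 < (n - 1 - r) * n ^ (m - 1) := Nat.mul_pos (by omega) (pow_pos (by omega) _)
  have hterm : ∀ j ∈ range m, (X ^ (r * n ^ j + (n - 1 - r) * n ^ (m - 1)) -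
      X ^ ((n - 1 - r) * (n ^ (m - 1) - n ^ j)) : ℂ[X]).coeff 0 =
      if j = m - 1 then -1 else 0 := by
    intro j hj
    have hjm : j < m := mem_range.mp hj
    rw [coeff_sub, coeff_X_pow, coeff_X_pow, if_neg (by omega)]
    split_ifs with h1 h2 h2
    · simp
    · have : n ^ j < n ^ (m - 1) := Nat.pow_lt_pow_right (by omega) (by omega)
      have := Nat.mul_pos (by omega : 0 < n - 1 - r) (by omega : 0 < n ^ (m - 1) - n ^ j)
      omega
    · subst h2; simp at h1
    · simp
  rw [orbitDiffPoly, finsetSum_coeff, sum_congr rfl hterm, sum_ite_eq',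
    if_pos (mem_range.mpr (by omega))]

theorem natDegree_orbitDiffPoly_le (hr : r ≤ n - 1) :
    (orbitDiffPoly n m r).natDegree ≤ (n - 1) * n ^ (m - 1) := by
  refine natDegree_sum_le_of_forall_le _ _ fun j hj => (natDegree_sub_le _ _).trans ?_
  rw [natDegree_X_pow, natDegree_X_pow, max_le_iff]
  constructor
  · rcases Nat.eq_zero_or_pos n with rfl | hn
    · simp; omega
    have hj : n ^ j ≤ n ^ (m - 1) := Nat.pow_le_pow_right hn (by simp at hj; omega)
    calc r * n ^ j + (n - 1 - r) * n ^ (m - 1)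
        ≤ r * n ^ (m - 1) + (n - 1 - r) * n ^ (m - 1) := by gcongr
      _ = (n - 1) * n ^ (m - 1) := by rw [← add_mul, Nat.add_sub_cancel' hr]
  · exact Nat.mul_le_mul (Nat.sub_le _ _) (Nat.sub_le _ _)

end OrbitDiffPoly

theorem card_roots_union_nthRootsFinset_lt {n m : ℕ} (hn : 2 ≤ n) (hm : 3 ≤ m) {q : ℂ[X]}
    (hq : q.natDegree ≤ (n - 1) * n ^ (m - 1)) :
    #(q.roots.toFinset ∪ m.properDivisors.biUnion fun d => nthRootsFinset (n ^ d - 1) (1 : ℂ)) <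
      n ^ m - 1 := by
  classical
  have hsum := one_add_sum_pow_properDivisors_lt hn hm
  have hnm : (n - 1) * n ^ (m - 1) + n ^ (m - 1) = n ^ m := by
    rw [← Nat.succ_mul, Nat.succ_eq_add_one, Nat.sub_add_cancel (by omega), ← pow_succ',
      Nat.sub_add_cancel (by omega)]
  calc _ ≤ q.natDegree + ∑ d ∈ m.properDivisors, n ^ d := by
        refine (card_union_le _ _).trans (add_le_add
          ((Multiset.toFinset_card_le _).trans (card_roots' q)) (card_biUnion_le.trans ?_))
        refine sum_le_sum fun d hd => ?_
        rw [Complex.card_nthRootsFinset_one (Nat.sub_ne_zero_of_lt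
          (Nat.one_lt_pow (Nat.pos_of_mem_properDivisors hd).ne' (by omega)))]
        exact Nat.sub_le _ _
    _ < n ^ m - 1 := by omega

theorem exists_mem_perSet_orbitDiff_ne_zero {n m r : ℕ} (hr : r < n - 1) (hm : 3 ≤ m) :
    ∃ ξ : ℂ, ξ ≠ 0 ∧ ξ ∈ perSet n m ∧ orbitDiff n m r ξ ≠ 0 := by
  classical
  have hpow : ∀ d, 1 ≤ d → 0 < n ^ d - 1 := fun d hd =>
    Nat.sub_pos_of_lt (Nat.one_lt_pow (by omega) (by omega))
  set q := orbitDiffPoly n m r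
  have hq : q ≠ 0 := fun h => by
    simpa [q, h] using orbitDiffPoly_coeff_zero hr (by omega : 1 ≤ m)
  -- a `ξ` with `ξ ^ (n ^ m - 1) = 1` outside `bad` has exact period `m` and `orbitDiff ≠ 0`
  set bad := q.roots.toFinset ∪
    m.properDivisors.biUnion fun d => nthRootsFinset (n ^ d - 1) (1 : ℂ)
  have hcard : #bad < #(nthRootsFinset (n ^ m - 1) (1 : ℂ)) := by
    rw [Complex.card_nthRootsFinset_one (hpow m (by omega)).ne']
    exact card_roots_union_nthRootsFinset_lt (by omega) hm (natDegree_orbitDiffPoly_le hr.le)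
  obtain ⟨ξ, hξ, hξbad⟩ := exists_mem_notMem_of_card_lt_card hcard
  have hξ0 : ξ ≠ 0 := ne_zero_of_mem_nthRootsFinset one_ne_zero hξ
  simp only [bad, mem_union, mem_biUnion, Multiset.mem_toFinset, mem_roots hq, IsRoot.def,
    not_or, not_exists, not_and] at hξbad
  refine ⟨ξ, hξ0, mem_perSet_of_pow_eq_one (by omega) hξ0 ?_ fun d hd h => hξbad.2 d hd ?_,
    fun h => hξbad.1 ?_⟩
  · exact (mem_nthRootsFinset (hpow m (by omega)) 1).mp hξ
  · exact (mem_nthRootsFinset (hpow d (Nat.pos_of_mem_properDivisors hd)) 1).mpr h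
  · rw [eval_orbitDiffPoly (by omega) hr.le hξ0, h, mul_zero]

theorem span_orbitDiffVec_eq_top {n m : ℕ} (hm : 3 ≤ m) :
    Submodule.span ℂ (orbitDiffVec n m '' {z | z ≠ 0 ∧ z ∈ perSet n m}) = ⊤ := by
  classical
  by_contra hspan
  obtain ⟨f, hf0, hle⟩ := Submodule.exists_le_ker_of_lt_top _ (lt_top_iff_ne_top.mpr hspan)
  set d : Fin (n - 2) → ℂ := fun r => f (Pi.single r 1)
  have hf : ∀ v, f v = ∑ r, v r * d r := fun v => by
    conv_lhs => rw [pi_eq_sum_univ' v]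
    simp [d]
  obtain ⟨r₀, hr₀⟩ : ∃ r₀, d r₀ ≠ 0 := by
    by_contra! h
    exact hf0 (LinearMap.ext fun v => by simp [hf, h])
  have hn : 3 ≤ n := by have := r₀.isLt; omega
  obtain ⟨ξ, hξ0, hξ, hdiff⟩ :=
    exists_mem_perSet_orbitDiff_ne_zero (n := n) (m := m) (r := r₀ + 1) (by omega) hm
  -- `p.eval ζ = f (orbitDiffVec n m (ζ * ξ))` for every root of unity `ζ` of order `n - 1`
  set p : ℂ[X] := ∑ r : Fin (n - 2), monomial (r + 1) (d r * orbitDiff n m (r + 1) ξ)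
  have hp : p = 0 := by
    refine eq_zero_of_natDegree_lt_card_of_eval_eq_zero' p (nthRootsFinset (n - 1) 1)
      (fun ζ hζ => ?_) ?_
    · have hζ0 : ζ ≠ 0 := ne_zero_of_mem_nthRootsFinset one_ne_zero hζ
      have hζn : ζ ^ n = ζ := (pow_eq_self_iff_pow_pred_eq_one hζ0 (by omega)).mpr
        ((mem_nthRootsFinset (by omega) 1).mp hζ)
      have hker := hle (Submodule.subset_span
        ⟨ζ * ξ, ⟨mul_ne_zero hζ0 hξ0, mul_mem_perSet hζn hζ0 hξ⟩, rfl⟩)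
      rw [LinearMap.mem_ker, hf] at hker
      rw [← hker]
      simp only [p, eval_finsetSum, eval_monomial, orbitDiffVec,
        orbitDiff_mul_of_pow_eq_self hζn hζ0]
      refine sum_congr rfl fun r _ => ?_
      ring
    · rw [Complex.card_nthRootsFinset_one (by omega)]
      refine (natDegree_sum_le_of_forall_le (n := n - 2) _ _ fun r _ =>
        (natDegree_monomial_le _).trans (by omega)).trans_lt (by omega)
  have hcoeff := congr_arg (coeff · (r₀ + 1)) hp
  simp only [p, finsetSum_coeff, coeff_monomial, coeff_zero] at hcoeff
  rw [sum_eq_single r₀ (fun r _ hr => if_neg fun h => hr (Fin.ext (by omega)))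
    (fun h => absurd (mem_univ r₀) h), if_pos rfl] at hcoeff
  exact mul_ne_zero hr₀ hdiff hcoeff

theorem exists_fixed_and_periodic_points {ι : Type*} [DecidableEq ι] {n : ℕ} (hn : 2 ≤ n)
    {s : Finset ι} {m : ι → ℕ} (hm : ∀ k ∈ s, m k = 1 ∨ 3 ≤ m k)
    (hfix : #(s.filter (m · = 1)) ≤ n - 1) (hper : #(s.filter (m · ≠ 1)) ≤ n - 2) :
    ∃ z : ι → ℂ, (∀ k ∈ s, z k ≠ 0 ∧ z k ∈ perSet n (m k)) ∧
      Set.InjOn z (s.filter (m · = 1)) ∧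
      LinearIndepOn ℂ (fun k => orbitDiffVec n (m k) (z k)) (s.filter (m · ≠ 1)) := by
  obtain ⟨x, hxT, hx⟩ := exists_linearIndepOn_of_span_image_eq_top (s.filter (m · ≠ 1))
    (by rwa [Module.finrank_fin_fun]) (fun k => {z | z ≠ 0 ∧ z ∈ perSet n (m k)})
    (fun k => orbitDiffVec n (m k)) fun k hk => span_orbitDiffVec_eq_top (by
      obtain ⟨hk, h1⟩ := mem_filter.mp hk
      have := hm k hk
      omega)
  obtain ⟨e⟩ : Nonempty (s.filter (m · = 1) ↪ nthRootsFinset (n - 1) (1 : ℂ)) :=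
    Function.Embedding.nonempty_of_card_le (by
      rwa [Fintype.card_coe, Fintype.card_coe, Complex.card_nthRootsFinset_one (by omega)])
  set z : ι → ℂ := fun k => if h : k ∈ s.filter (m · = 1) then (e ⟨k, h⟩ : ℂ) else x k
  have hzx : ∀ k, m k ≠ 1 → z k = x k := fun k h1 => by simp [z, h1]
  refine ⟨z, fun k hk => ?_, fun a ha b hb hab => ?_,
    hx.congr fun k hk => by simp [hzx k (mem_filter.mp hk).2]⟩
  · by_cases h1 : m k = 1
    · have hroot := (e ⟨k, mem_filter.mpr ⟨hk, h1⟩⟩).2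
      have hz0 : z k ≠ 0 := by
        simpa [z, hk, h1] using ne_zero_of_mem_nthRootsFinset one_ne_zero hroot
      refine ⟨hz0, mem_perSet_iff.mpr ⟨?_, fun j hj hj1 => by omega⟩⟩
      rw [h1, pow_one, pow_eq_self_iff_pow_pred_eq_one hz0 (by omega)]
      simpa [z, hk, h1] using (mem_nthRootsFinset (by omega) 1).mp hroot
    · rw [hzx k h1]
      exact hxT k (mem_filter.mpr ⟨hk, h1⟩)
  · simp only [coe_filter, Set.mem_ofPred_eq] at ha hb
    simpa [z, ha, hb, Subtype.ext_iff] using hab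

theorem mem_Jset {n i : ℕ} : i ∈ Jset n ↔ i < 2 * n ∧ i ≠ n - 1 ∧ i ≠ n := by
  simp [Jset]

theorem card_Jset (n : ℕ) : #(Jset n) = 2 * n - 2 := by
  rcases Nat.lt_or_ge n 2 with hn | hn
  · interval_cases n <;> decide
  have h : Jset n = ((range (2 * n)).erase n).erase (n - 1) := by
    ext i
    simp only [mem_Jset, mem_erase, mem_range]
    omega
  rw [h, card_erase_of_mem (by simp; omega), card_erase_of_mem (by simp; omega), card_range]
  omega

section EvalP

variable {n m i : ℕ} {z : ℂ}

theorem zpow_neg_mul_pow {N : ℤ} {a : ℕ} {b : ℤ} (hz0 : z ≠ 0) (h : (a : ℤ) - N = b) :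
    z ^ (-N) * z ^ a = z ^ b := by
  rw [← zpow_natCast, ← zpow_add₀ hz0, ← h, neg_add_eq_sub]

theorem orbitPowSum_eq_of_le_sub_two (hn : 1 ≤ n) (hz0 : z ≠ 0) (hz : z ^ n ^ (m + 1) = z)
    (hi : i ≤ n - 2) :
    orbitPowSum n (m + 1) z (i - n) = z ^ (-((n : ℤ) ^ m)) *
      (z ^ ((i + 1) * n ^ m - 1) + ∑ j ∈ range m, z ^ (n ^ m - n ^ j * (n - i))) := by
  rw [orbitPowSum, sum_range_succ, add_comm, mul_add, mul_sum]
  congr 1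
  · have : 1 ≤ (i + 1) * n ^ m := Nat.one_le_iff_ne_zero.mpr (by positivity)
    rw [← zpow_add_pred_of_pow_eq_self hz hz0 (((i : ℤ) - n) * n ^ m)]
    exact (zpow_neg_mul_pow hz0 (by push_cast [this]; ring)).symm
  · refine sum_congr rfl fun j hj => (zpow_neg_mul_pow hz0 ?_).symm
    have : n ^ j * (n - i) ≤ n ^ m := calc
      n ^ j * (n - i) ≤ n ^ j * n := Nat.mul_le_mul_left _ (Nat.sub_le _ _)
      _ ≤ n ^ m := by rw [← pow_succ]; exact Nat.pow_le_pow_right (by omega) (mem_range.mp hj)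
    push_cast [this, show i ≤ n by omega]
    ring

theorem orbitPowSum_eq_of_le (hz0 : z ≠ 0) (hi : n ≤ i) :
    orbitPowSum n (m + 1) z (i - n) =
      z ^ (-((n : ℤ) ^ m)) * ∑ j ∈ range (m + 1), z ^ (n ^ j * (i - n) + n ^ m) := by
  rw [orbitPowSum, mul_sum]
  refine sum_congr rfl fun j _ => (zpow_neg_mul_pow hz0 ?_).symm
  push_cast [hi]
  ring

theorem orbitPowSum_sub_one_eq (hz0 : z ≠ 0) (hz : z ^ n ^ (m + 1) = z) (hn : 1 ≤ n) :
    orbitPowSum n (m + 1) z (n - 1) = z ^ (-((n : ℤ) ^ m)) *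
      (z + ∑ j ∈ range m, z ^ (n ^ j * (n - 1) + n ^ m)) := by
  rw [orbitPowSum, sum_range_succ, add_comm, mul_add, mul_sum]
  congr 1
  · have h := zpow_neg_mul_pow (z := z) (N := (n : ℤ) ^ m) (a := 1)
      (b := ((n : ℤ) - 1) * n ^ m - ((n ^ (m + 1) : ℕ) - 1)) hz0 (by push_cast; ring)
    rw [pow_one] at h
    rw [← zpow_sub_pred_of_pow_eq_self hz hz0 (((n : ℤ) - 1) * n ^ m), h]
  · refine sum_congr rfl fun j _ => (zpow_neg_mul_pow hz0 ?_).symm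
    push_cast [hn]
    ring

theorem zpow_neg_mul_eval_P (hm : 1 ≤ m) (hi : i ∈ Jset n) (hz0 : z ≠ 0)
    (hz : z ^ n ^ m = z) :
    z ^ (-((n : ℤ) ^ (m - 1))) * (P n i m).eval z =
      (n : ℂ) ^ (m - 1) * ((i : ℂ) - n) * orbitPowSum n m z (i - n) := by
  obtain ⟨m, rfl⟩ : ∃ k, m = k + 1 := ⟨m - 1, by omega⟩
  rw [P, eval_mul, eval_C]
  simp only [Nat.add_sub_cancel]
  rw [show (i : ℂ) * n ^ m - n ^ (m + 1) = n ^ m * (i - n) by ring, mul_left_comm]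
  congr 1
  rw [mem_Jset] at hi
  rcases (by omega : i ≤ n - 2 ∨ (n + 1 ≤ i ∧ i ≤ 2 * n - 2) ∨ i = 2 * n - 1)
    with hi' | hi' | rfl
  · rw [if_pos hi', orbitPowSum_eq_of_le_sub_two (by omega) hz0 hz hi']
    simp only [eval_add, eval_pow, eval_X, eval_finsetSum]
  · rw [if_neg (by omega), if_pos hi'.2, orbitPowSum_eq_of_le hz0 (by omega)]
    simp only [eval_pow, eval_X, eval_finsetSum]
  · rw [if_neg (by omega), if_neg (by omega), show ((2 * n - 1 : ℕ) : ℤ) - n = n - 1 by omega,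
      orbitPowSum_sub_one_eq hz0 hz (by omega)]
    simp only [eval_add, eval_pow, eval_X, eval_finsetSum]

end EvalP

section Columns

variable {ι : Type*} {n : ℕ} {s : Finset ι} {m : ι → ℕ} {z c : ι → ℂ}

theorem sum_orbitPowSum_eq_zero_of_forall_column (hz : ∀ k ∈ s, z k ^ n ^ m k = z k)
    (hrel : ∀ i ∈ Jset n, i ≠ 2 * n - 1 →
      ∑ k ∈ s, c k * orbitPowSum n (m k) (z k) (i - n) = 0) :
    (∀ r < n - 1, ∑ k ∈ s, c k * orbitPowSum n (m k) (z k) (r - (n - 1 : ℤ)) = 0) ∧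
      ∀ r, 1 ≤ r → r ≤ n - 2 → ∑ k ∈ s, c k * orbitPowSum n (m k) (z k) r = 0 := by
  refine ⟨fun r hr => ?_, fun r h1 h2 => by
    simpa using hrel (n + r) (mem_Jset.mpr (by omega)) (by omega)⟩
  rcases (by omega : r + 2 < n ∨ r + 2 = n) with hr' | hr'
  · convert hrel (r + 1) (mem_Jset.mpr (by omega)) (by omega) using 4
    push_cast
    ring
  -- column `0` has exponent `-n`, which `w ↦ wⁿ` turns into `-1 = (n - 2) - (n - 1)` on orbits
  · rw [← hrel 0 (mem_Jset.mpr (by omega)) (by omega)]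
    refine sum_congr rfl fun k hk => ?_
    rw [show ((0 : ℕ) : ℤ) - n = -1 * n by ring, orbitPowSum_mul_self (hz k hk)]
    congr 2
    omega

theorem eq_zero_of_sum_orbitPowSum_eq_zero [DecidableEq ι] (hn : 2 ≤ n)
    (hz : ∀ k ∈ s, z k ≠ 0 ∧ z k ^ n ^ m k = z k)
    (hinj : Set.InjOn z (s.filter (m · = 1)))
    (hind : LinearIndepOn ℂ (fun k => orbitDiffVec n (m k) (z k)) (s.filter (m · ≠ 1)))
    (hlow : ∀ r < n - 1, ∑ k ∈ s, c k * orbitPowSum n (m k) (z k) (r - (n - 1 : ℤ)) = 0)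
    (hhigh : ∀ r, 1 ≤ r → r ≤ n - 2 →
      ∑ k ∈ s, c k * orbitPowSum n (m k) (z k) r = 0) :
    ∀ k ∈ s, c k = 0 := by
  have hfix : ∀ k ∈ s, m k = 1 → z k ^ n = z k := fun k hk h1 => by
    simpa [h1] using (hz k hk).2
  have hvec0 : ∀ k ∈ s, m k = 1 → orbitDiffVec n (m k) (z k) = 0 := fun k hk h1 => by
    ext r
    simp [orbitDiffVec, h1, orbitDiff_one_of_pow_eq_self (hfix k hk h1) (hz k hk).1]
  have hper : ∀ k ∈ s, m k ≠ 1 → c k = 0 := by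
    refine fun k hk h1 => linearIndepOn_finset_iff.mp hind c ?_ k (mem_filter.mpr ⟨hk, h1⟩)
    rw [sum_filter_of_ne (p := (m · ≠ 1)) fun k hk hne h1 =>
      hne (by rw [hvec0 k hk h1, smul_zero])]
    ext r
    simp only [Finset.sum_apply, Pi.smul_apply, smul_eq_mul, orbitDiffVec, orbitDiff, mul_sub,
      sum_sub_distrib, Pi.zero_apply]
    rw [hlow _ (by omega), hhigh (r + 1) (by omega) (by omega), sub_zero]
  have hcard : #(s.filter (m · = 1)) ≤ n - 1 := by
    rw [← Complex.card_nthRootsFinset_one (by omega : n - 1 ≠ 0)]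
    refine card_le_card_of_injOn z (fun k hk => ?_) hinj
    obtain ⟨hk, h1⟩ := mem_filter.mp hk
    exact (mem_nthRootsFinset (by omega) 1).mpr
      ((pow_eq_self_iff_pow_pred_eq_one (hz k hk).1 (by omega)).mp (hfix k hk h1))
  have hfix0 := eq_zero_of_forall_sum_mul_pow_eq_zero hinj hcard (c := c) fun r hr => by
    rw [← hlow r hr, sum_filter]
    refine sum_congr rfl fun k hk => ?_
    split_ifs with h1
    · rw [h1, orbitPowSum_one, zpow_sub_pred_of_pow_eq_self (hfix k hk h1) (hz k hk).1,
        zpow_natCast]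
    · rw [hper k hk h1, zero_mul]
  intro k hk
  by_cases h1 : m k = 1
  · exact hfix0 k (mem_filter.mpr ⟨hk, h1⟩)
  · exact hper k hk h1

end Columns

noncomputable def multiplierMatrix (n t : ℕ) (m : ℕ → ℕ) (z : ℕ → ℂ) :
    Matrix (Jset n) (Jset n) ℂ :=
  Matrix.of fun k i =>
    if (k : ℕ) = t then (if (i : ℕ) = 2 * n - 1 then (-1 : ℂ) else 0)
    else z k ^ (-((n : ℤ) ^ (m k - 1))) * (P n i (m k)).eval (z k)

section MultiplierMatrix

variable {n t : ℕ} {m : ℕ → ℕ} {z : ℕ → ℂ}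

open scoped Matrix in
theorem vecMul_multiplierMatrix_apply (hm : ∀ k ∈ Jset n, 1 ≤ m k)
    (hz : ∀ k ∈ (Jset n).erase t, z k ≠ 0 ∧ z k ^ n ^ m k = z k) (htJ : t ∈ Jset n)
    {w : Jset n → ℂ} (hwt : w ⟨t, htJ⟩ = 0) {i : ℕ} (hi : i ∈ Jset n) :
    (w ᵥ* multiplierMatrix n t m z) ⟨i, hi⟩ = ((i : ℂ) - n) * ∑ k ∈ (Jset n).erase t,
      (if h : k ∈ Jset n then w ⟨k, h⟩ else 0) * (n : ℂ) ^ (m k - 1) *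
        orbitPowSum n (m k) (z k) (i - n) := by
  rw [Matrix.vecMul, dotProduct, mul_sum, sum_erase]
  · rw [← sum_coe_sort (Jset n)]
    refine sum_congr rfl fun k _ => ?_
    by_cases hkt : (k : ℕ) = t
    · obtain ⟨k, hk⟩ := k
      subst hkt
      simp [hk, hwt]
    · obtain ⟨hz0, hzm⟩ := hz k (mem_erase.mpr ⟨hkt, k.2⟩)
      simp only [multiplierMatrix, Matrix.of_apply, if_neg hkt, dif_pos k.2,
        zpow_neg_mul_eval_P (hm k k.2) hi hz0 hzm]
      ring
  · simp [htJ, hwt]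

theorem det_multiplierMatrix_ne_zero (hn : 2 ≤ n) (hm : ∀ k ∈ Jset n, 1 ≤ m k)
    (hz : ∀ k ∈ (Jset n).erase t, z k ≠ 0 ∧ z k ^ n ^ m k = z k) (htJ : t ∈ Jset n)
    (hinj : Set.InjOn z (((Jset n).erase t).filter (m · = 1)))
    (hind : LinearIndepOn ℂ (fun k => orbitDiffVec n (m k) (z k))
      (((Jset n).erase t).filter (m · ≠ 1))) :
    (multiplierMatrix n t m z).det ≠ 0 := by
  refine Matrix.det_ne_zero_of_row_eq_single (t := ⟨t, htJ⟩)
    (c := ⟨2 * n - 1, mem_Jset.mpr (by omega)⟩) (neg_ne_zero.mpr one_ne_zero) ?_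
    fun w hwt hw => ?_
  · ext i
    simp [multiplierMatrix, Pi.single_apply, Subtype.ext_iff]
  obtain ⟨hlow, hhigh⟩ := sum_orbitPowSum_eq_zero_of_forall_column (fun k hk => (hz k hk).2)
    fun i hi hic => by
      have hin : (i : ℂ) - n ≠ 0 := sub_ne_zero.mpr (by exact_mod_cast (mem_Jset.mp hi).2.2)
      have hcol := hw ⟨i, hi⟩ (by simpa [Subtype.ext_iff] using hic)
      rw [vecMul_multiplierMatrix_apply hm hz htJ hwt hi] at hcol
      exact (mul_eq_zero.mp hcol).resolve_left hin
  have hc := eq_zero_of_sum_orbitPowSum_eq_zero hn hz hinj hind hlow hhigh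
  ext ⟨k, hk⟩
  by_cases hkt : k = t
  · subst hkt
    exact hwt
  · simpa [hk, show n ≠ 0 by omega] using hc k (mem_erase.mpr ⟨hkt, hk⟩)

end MultiplierMatrix

theorem exists_independent_multipliers_with_infinity_general (n : ℕ) (hn : 3 ≤ n) (m : ℕ → ℕ)
    (hm1 : ∀ k ∈ Jset n, 1 ≤ m k)
    (hcard : ((Jset n).filter (fun k => m k = 1)).card = n)
    (hne2 : ∀ k ∈ Jset n, m k ≠ 2) :
    ∃ t ∈ Jset n, m t = 1 ∧
      ∃ z : ℕ → ℂ,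
        (∀ k ∈ Jset n, k ≠ t → z k ≠ 0 ∧ z k ∈ perSet n (m k)) ∧
        (Matrix.of fun (k i : (Jset n : Finset ℕ)) =>
          if (k : ℕ) = t then (if (i : ℕ) = 2 * n - 1 then (-1 : ℂ) else 0)
          else
            z (k : ℕ) ^ (-((n : ℤ) ^ (m (k : ℕ) - 1))) *
              (P n (i : ℕ) (m (k : ℕ))).eval (z (k : ℕ))).det ≠ 0 := by
  classical
  obtain ⟨t, ht⟩ : ((Jset n).filter (m · = 1)).Nonempty := card_pos.mp (by omega)
  obtain ⟨htJ, htm⟩ := mem_filter.mp ht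
  have hJ : #((Jset n).filter (m · = 1)) + #((Jset n).filter (m · ≠ 1)) = 2 * n - 2 := by
    rw [card_filter_add_card_filter_not, card_Jset n]
  obtain ⟨z, hz, hinj, hind⟩ := exists_fixed_and_periodic_points (n := n)
    (s := (Jset n).erase t) (m := m) (by omega)
    (fun k hk => by
      have := hm1 k (mem_of_mem_erase hk)
      have := hne2 k (mem_of_mem_erase hk)
      omega)
    (by rw [filter_erase, card_erase_of_mem ht, hcard])
    ((card_le_card (filter_subset_filter _ (erase_subset t _))).trans (by omega))
  refine ⟨t, htJ, htm, z, fun k hk hkt => hz k (mem_erase.mpr ⟨hkt, hk⟩), ?_⟩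
  exact det_multiplierMatrix_ne_zero (by omega) hm1
    (fun k hk => ⟨(hz k hk).1, (mem_perSet_iff.mp (hz k hk).2).1⟩) htJ hinj hind

/-- Proposition 7.1 (case of exactly `n` fixed points, using the fixed point at
infinity): for `n ≥ 3` and periods `(m_k)_{k ∈ J_n}` with exactly `n` of them equal to
`1`, none equal to `2`, and at least one greater than `2`, there exist an index
`t ∈ J_n` with `m_t = 1` and nonzero periodic points `z_k` of minimal periods `m_k`
(for `k ∈ J_n`, `k ≠ t`) such that the `(2n-2)×(2n-2)` matrix whose row `t` is
`(0,…,0,-1)` (entry `-1` in column `2n-1`) and whose `(k,i)`-entry for `k ≠ t` is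
`z_k^{-n^{m_k-1}} P_{n,i,m_k}(z_k)` is invertible. -/
theorem exists_independent_multipliers_with_infinity (n : ℕ) (hn : 3 ≤ n) (m : ℕ → ℕ)
    (hm1 : ∀ k ∈ Jset n, 1 ≤ m k)
    (hcard : ((Jset n).filter (fun k => m k = 1)).card = n)
    (hne2 : ∀ k ∈ Jset n, m k ≠ 2)
    (hex : ∃ k ∈ Jset n, 2 < m k) :
    ∃ t ∈ Jset n, m t = 1 ∧
      ∃ z : ℕ → ℂ,
        (∀ k ∈ Jset n, k ≠ t → z k ≠ 0 ∧ z k ∈ perSet n (m k)) ∧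
        (Matrix.of fun (k i : (Jset n : Finset ℕ)) =>
          if (k : ℕ) = t then (if (i : ℕ) = 2 * n - 1 then (-1 : ℂ) else 0)
          else
            z (k : ℕ) ^ (-((n : ℤ) ^ (m (k : ℕ) - 1))) *
              (P n (i : ℕ) (m (k : ℕ))).eval (z (k : ℕ))).det ≠ 0 :=
  exists_independent_multipliers_with_infinity_general n hn m hm1 hcard hne2
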